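/- arXiv:1905.07988 — 4 statements merged into one kernel-verified Lean document; each statement's English description precedes it below -/
import Mathlib

section
/- Let Γ ⊆ ℝ² be a Borel set with finite one-dimensional Hausdorff measure, let v be a nonzero vector, let x ∈ ℝ², and let y ∈ ℝ² be a point not lying on the line x + ℝv. Then for almost every t ∈ ℝ (with respect to Lebesgue measure), the segment from x + tv to y intersects Γ in a set of H^1-measure zero. -/
/-! The segments `[x + t v, y]`, `t ∈ ℝ`, pairwise meet only in `y`, which is `μH[1]`-null. So
their traces on `Γ` are almost disjoint pieces of the finite measure `μH[1]` restricted to `Γ`,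
and only countably many of them can have positive measure. -/

open MeasureTheory

theorem segment_inter_segment_subset_singleton {𝕜 E : Type*} [Field 𝕜] [LinearOrder 𝕜]
    [IsStrictOrderedRing 𝕜] [AddCommGroup E] [Module 𝕜 E] {x v y : E} (hv : v ≠ 0)
    (hy : ∀ t : 𝕜, y ≠ x + t • v) {s t : 𝕜} (hst : s ≠ t) :
    segment 𝕜 (x + s • v) y ∩ segment 𝕜 (x + t • v) y ⊆ {y} := by
  rintro z ⟨hzs, hzt⟩
  rw [segment_symm, segment_eq_image'] at hzs hzt
  obtain ⟨a, -, rfl⟩ := hzs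
  obtain ⟨c, -, hca⟩ := hzt
  have hrel : (a - c) • (x - y) = (c * t - a * s) • v := by
    linear_combination (norm := module) -hca
  by_cases hac : a = c
  · subst hac
    have ha : a * (t - s) = 0 := by
      simpa [hv, mul_sub] using hrel.symm
    have ha0 : a = 0 := by simpa [sub_eq_zero, hst.symm] using ha
    simp [ha0]
  · refine absurd ?_ (hy ((a * s - c * t) / (a - c)))
    have hac' : a - c ≠ 0 := sub_ne_zero.mpr hac
    have hxy : x - y = ((c * t - a * s) / (a - c)) • v := by
      rw [div_eq_inv_mul, mul_smul, ← hrel, inv_smul_smul₀ hac']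
    rw [← neg_sub (c * t), neg_div, neg_smul, ← hxy]
    abel

theorem MeasureTheory.Measure.countable_meas_pos_of_pairwise_countable_inter {α ι : Type*}
    [MeasurableSpace α] {μ : Measure α} [SFinite μ] [NullSingletonClass μ] {S : ι → Set α}
    (hS : ∀ i, NullMeasurableSet (S i) μ) (hinter : Pairwise fun i j => (S i ∩ S j).Countable) :
    {i | 0 < μ (S i)}.Countable :=
  Measure.countable_meas_pos_of_disjoint_iUnion₀ hS fun _ _ hij => (hinter hij).measure_zero μ

theorem ae_segment_meets_in_null_set_general
    (Γ : Set (EuclideanSpace ℝ (Fin 2)))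
    (hΓfin : μH[1] Γ < ⊤)
    (v : EuclideanSpace ℝ (Fin 2)) (hv : v ≠ 0)
    (x y : EuclideanSpace ℝ (Fin 2))
    (hy : ∀ t : ℝ, y ≠ x + t • v) :
    ∀ᵐ t : ℝ, μH[1] (segment ℝ (x + t • v) y ∩ Γ) = 0 := by
  have : NullSingletonClass (μH[1] : Measure (EuclideanSpace ℝ (Fin 2))) :=
    Measure.nullSingletonClass_hausdorff _ one_pos
  have : IsFiniteMeasure (μH[1].restrict Γ) := isFiniteMeasure_restrict.2 hΓfin.ne
  have hmeas : ∀ t : ℝ, MeasurableSet (segment ℝ (x + t • v) y) := fun t => by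
    rw [← convexHull_pair (𝕜 := ℝ)]
    exact ((Set.toFinite _).isCompact_convexHull ℝ).isClosed.measurableSet
  have hcount := Measure.countable_meas_pos_of_pairwise_countable_inter
    (μ := μH[1].restrict Γ) (fun t => (hmeas t).nullMeasurableSet)
    fun s t hst => (Set.countable_singleton y).mono
      (segment_inter_segment_subset_singleton hv hy hst)
  rw [ae_iff]
  simpa only [Measure.restrict_apply (hmeas _), pos_iff_ne_zero] using hcount.measure_zero volume

theorem ae_segment_meets_in_null_set
    (Γ : Set (EuclideanSpace ℝ (Fin 2))) (hΓ : MeasurableSet Γ)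
    (hΓfin : μH[1] Γ < ⊤)
    (v : EuclideanSpace ℝ (Fin 2)) (hv : v ≠ 0)
    (x y : EuclideanSpace ℝ (Fin 2))
    (hy : ∀ t : ℝ, y ≠ x + t • v) :
    ∀ᵐ t : ℝ, μH[1] (segment ℝ (x + t • v) y ∩ Γ) = 0 :=
  ae_segment_meets_in_null_set_general Γ hΓfin v hv x y hy
end

section
/- Let Ω ⊆ ℝ² be a domain (open connected set), F a connected component of the boundary ∂Ω, and B the connected component of the complement ℝ² \ Ω containing F. Then the boundary of B equals F. -/
/-!
The plane is unicoherent: if two closed connected sets cover it, their intersection is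
connected. Indeed, were `A ∩ B = P ⊔ Q` a separation, a Urysohn function `f` with `f = 0` on `P`
and `f = 1` on `Q` makes `exp (iπf)` on `A` and `exp (-iπf)` on `B` into one nonvanishing map,
which has a continuous logarithm since the plane is simply connected; comparing it with `±iπf`
on `A` and on `B` forces `2πi = 0`.

Now `∂B = closure B ∩ closure Bᶜ`, and `Bᶜ` is connected: it is `Ω` together with the other
components of `ℝ² \ Ω`, each of which meets `∂Ω ⊆ closure Ω`. Hence `∂B` is connected; it lies
in `∂Ω` and contains `F`, so it is `F`.
-/

open Set Complex

variable {X : Type*} [TopologicalSpace X]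

theorem exists_continuous_exp_eq [SimplyConnectedSpace X] [LocallyPathConnectedSpace X]
    {g : X → ℂ} (hg : Continuous g) (hg₀ : ∀ x, g x ≠ 0) :
    ∃ h : X → ℂ, Continuous h ∧ ∀ x, exp (h x) = g x := by
  obtain ⟨x₀⟩ : Nonempty X := inferInstance
  obtain ⟨h, -, hh⟩ := (isCoveringMapOn_exp.existsUnique_continuousMap_lifts ⟨g, hg⟩
    (exp_log (hg₀ x₀)) hg₀).exists
  exact ⟨h, h.continuous, congrFun hh⟩

theorem IsPreconnected.eq_of_exp_eq_one {s : Set X} (hs : IsPreconnected s) {φ : X → ℂ}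
    (hφ : ContinuousOn φ s) (hφ₁ : ∀ x ∈ s, exp (φ x) = 1) {x y : X} (hx : x ∈ s)
    (hy : y ∈ s) : φ x = φ y :=
  isCoveringMap_exp.constOn_of_comp hs hφ
    (fun a ha a' ha' => Subtype.ext <| (hφ₁ a ha).trans (hφ₁ a' ha').symm) hx hy

theorem isPreconnected_inter_of_union_eq_univ [NormalSpace X] [SimplyConnectedSpace X]
    [LocallyPathConnectedSpace X] {A B : Set X} (hA : IsClosed A) (hB : IsClosed B)
    (hAc : IsPreconnected A) (hBc : IsPreconnected B) (hAB : A ∪ B = univ) :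
    IsPreconnected (A ∩ B) := by
  classical
  rw [isPreconnected_closed_iff]
  intro P Q hP hQ hPQ ⟨p, hpAB, hpP⟩ ⟨q, hqAB, hqQ⟩
  by_contra hdisj
  obtain ⟨f, hfP, hfQ, -⟩ := exists_continuous_zero_one_of_isClosed
    ((hA.inter hB).inter hP) ((hA.inter hB).inter hQ)
    (disjoint_left.mpr fun x hxP hxQ => hdisj ⟨x, hxP.1, hxP.2, hxQ.2⟩)
  set θ : X → ℂ := fun x => Real.pi * f x * I with hθ
  have hθc : Continuous θ := by fun_prop
  have hθ_eq : ∀ x ∈ A ∩ B, exp (-θ x) = exp (θ x) := by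
    intro x hx
    rcases hPQ hx with hxP | hxQ
    · simp [hθ, hfP ⟨hx, hxP⟩]
    · simp [hθ, hfQ ⟨hx, hxQ⟩, exp_neg, exp_pi_mul_I]
  set g : X → ℂ := B.piecewise (fun x => exp (-θ x)) (fun x => exp (θ x))
  have hgA : ∀ x ∈ A, g x = exp (θ x) := fun x hxA => by
    by_cases hxB : x ∈ B
    · simp [g, hxB, hθ_eq x ⟨hxA, hxB⟩]
    · simp [g, hxB]
  have hgB : ∀ x ∈ B, g x = exp (-θ x) := fun x hxB => by simp [g, hxB]
  have hgc : Continuous g := by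
    rw [← continuousOn_univ, ← hAB]
    exact ContinuousOn.union_of_isClosed
      ((continuous_exp.comp hθc).continuousOn.congr hgA)
      ((continuous_exp.comp hθc.neg).continuousOn.congr hgB) hA hB
  obtain ⟨h, hhc, hh⟩ := exists_continuous_exp_eq hgc fun x => by
    rcases (hAB ▸ mem_univ x : x ∈ A ∪ B) with hx | hx
    · simp [hgA x hx, exp_ne_zero]
    · simp [hgB x hx, exp_ne_zero]
  have hA_const : h p - θ p = h q - θ q :=
    hAc.eq_of_exp_eq_one (hhc.sub hθc).continuousOn
      (fun x hx => by rw [Pi.sub_apply, exp_sub, hh, hgA x hx, div_self (exp_ne_zero _)])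
      hpAB.1 hqAB.1
  have hB_const : h p + θ p = h q + θ q :=
    hBc.eq_of_exp_eq_one (hhc.add hθc).continuousOn
      (fun x hx => by
        rw [Pi.add_apply, exp_add, hh, hgB x hx, ← exp_add, neg_add_cancel, exp_zero])
      hpAB.2 hqAB.2
  have hθp : θ p = 0 := by simp [hθ, hfP ⟨hpAB, hpP⟩]
  have hθq : θ q = Real.pi * I := by simp [hθ, hfQ ⟨hqAB, hqQ⟩]
  have : (2 * Real.pi : ℂ) * I = 0 := by
    linear_combination hA_const - hB_const + 2 * hθp - 2 * hθq
  simp [Real.pi_ne_zero, I_ne_zero] at this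

theorem IsPreconnected.isPreconnected_frontier [NormalSpace X] [SimplyConnectedSpace X]
    [LocallyPathConnectedSpace X] {s : Set X} (hs : IsPreconnected s)
    (hs' : IsPreconnected sᶜ) : IsPreconnected (frontier s) := by
  rw [frontier_eq_closure_inter_closure]
  refine isPreconnected_inter_of_union_eq_univ isClosed_closure isClosed_closure hs.closure
    hs'.closure (eq_univ_of_univ_subset fun x _ => ?_)
  exact (em (x ∈ s)).imp (subset_closure ·) (subset_closure ·)

section ConnectedComponentIn

variable {C : Set X} {x : X}

theorem IsClosed.connectedComponentIn (hC : IsClosed C) : IsClosed (connectedComponentIn C x) := by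
  by_cases hx : x ∈ C
  · refine isClosed_of_closure_subset <| isPreconnected_connectedComponentIn.closure
      |>.subset_connectedComponentIn (subset_closure (mem_connectedComponentIn hx)) ?_
    exact hC.closure_subset_iff.mpr (connectedComponentIn_subset C x)
  · simp [connectedComponentIn_eq_empty hx]

theorem frontier_connectedComponentIn_subset [LocallyConnectedSpace X] :
    frontier (connectedComponentIn C x) ⊆ frontier C := by
  intro y ⟨hy_cl, hy_int⟩
  refine ⟨closure_mono (connectedComponentIn_subset C x) hy_cl, fun hyC => hy_int ?_⟩
  have hW := (isOpen_interior (s := C)).connectedComponentIn (x := y)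
  obtain ⟨t, htW, htK⟩ := mem_closure_iff.mp hy_cl _ hW (mem_connectedComponentIn hyC)
  rw [connectedComponentIn_eq htK]
  refine interior_maximal ?_ hW (mem_connectedComponentIn hyC)
  exact isPreconnected_connectedComponentIn.subset_connectedComponentIn htW
    ((connectedComponentIn_subset _ _).trans interior_subset)

theorem connectedComponentIn_frontier_subset (hC : IsClosed C) :
    connectedComponentIn (frontier C) x ⊆ frontier (connectedComponentIn C x) := by
  intro y hy
  have hyK := connectedComponentIn_mono x hC.frontier_subset hy
  refine ⟨subset_closure hyK, fun hy_int => ?_⟩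
  exact (connectedComponentIn_subset _ _ hy).2 <|
    interior_mono (connectedComponentIn_subset C x) hy_int

theorem connectedComponentIn_inter_frontier_nonempty [PreconnectedSpace X]
    [LocallyConnectedSpace X] (hC : IsClosed C) (hCu : C ≠ univ) (hx : x ∈ C) :
    (connectedComponentIn C x ∩ frontier C).Nonempty := by
  by_contra hK
  have hK_clopen : IsClopen (connectedComponentIn C x) := by
    refine isClopen_iff_frontier_eq_empty.mpr <| eq_empty_of_subset_empty fun y hy => hK ?_
    exact ⟨y, hC.connectedComponentIn.frontier_subset hy,
      frontier_connectedComponentIn_subset hy⟩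
  exact hCu <| eq_univ_of_univ_subset <|
    hK_clopen.eq_univ ⟨x, mem_connectedComponentIn hx⟩ ▸ connectedComponentIn_subset C x

theorem isPreconnected_compl_connectedComponentIn [PreconnectedSpace X]
    [LocallyConnectedSpace X] (hC : IsClosed C) (hCc : IsConnected Cᶜ) (x : X) :
    IsPreconnected (connectedComponentIn C x)ᶜ := by
  obtain ⟨w, hw⟩ := hCc.nonempty
  refine isPreconnected_of_forall w fun y hy => ?_
  by_cases hyC : y ∈ C
  swap
  · exact ⟨Cᶜ, compl_subset_compl.mpr (connectedComponentIn_subset C x), hw, hyC,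
      hCc.isPreconnected⟩
  have hKy : connectedComponentIn C y ⊆ (connectedComponentIn C x)ᶜ := by
    intro t hty htx
    exact hy <| connectedComponentIn_eq htx ▸ connectedComponentIn_eq hty ▸
      mem_connectedComponentIn hyC
  obtain ⟨c, hcK, hc_fr⟩ :=
    connectedComponentIn_inter_frontier_nonempty hC (fun h => (h ▸ hw) (mem_univ w)) hyC
  have hc_cl : c ∈ closure Cᶜ := (frontier_compl C ▸ hc_fr).1
  have hT : IsPreconnected (insert c Cᶜ) :=
    hCc.isPreconnected.subset_closure (subset_insert c _) (insert_subset hc_cl subset_closure)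
  refine ⟨insert c Cᶜ ∪ connectedComponentIn C y, ?_, Or.inl (Or.inr hw),
    Or.inr (mem_connectedComponentIn hyC),
    hT.union c (mem_insert c _) hcK isPreconnected_connectedComponentIn⟩
  refine union_subset (insert_subset (hKy hcK) ?_) hKy
  exact compl_subset_compl.mpr (connectedComponentIn_subset C x)

end ConnectedComponentIn

theorem frontier_component_of_complement
    (Ω : Set (EuclideanSpace ℝ (Fin 2)))
    (hΩopen : IsOpen Ω) (hΩconn : IsConnected Ω)
    (z : EuclideanSpace ℝ (Fin 2)) (hz : z ∈ frontier Ω)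
    (F B : Set (EuclideanSpace ℝ (Fin 2)))
    (hF : F = connectedComponentIn (frontier Ω) z)
    (hB : B = connectedComponentIn Ωᶜ z) :
    frontier B = F := by
  subst hF hB
  have hC : IsClosed Ωᶜ := hΩopen.isClosed_compl
  rw [← frontier_compl Ω] at hz ⊢
  have hF_sub := connectedComponentIn_frontier_subset (x := z) hC
  have hB_conn : IsPreconnected (frontier (connectedComponentIn Ωᶜ z)) :=
    isPreconnected_connectedComponentIn.isPreconnected_frontier
      (isPreconnected_compl_connectedComponentIn hC (by rwa [compl_compl]) z)
  exact (hB_conn.subset_connectedComponentIn (hF_sub (mem_connectedComponentIn hz))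
    frontier_connectedComponentIn_subset).antisymm hF_sub
end

section
/- Let Ω ⊆ ℝ² be a bounded domain with H^1(∂Ω) < ∞, and let x ∈ ∂Ω and r > 0. Then only finitely many connected components of Ω ∩ B(x, 2r) intersect the ball B(x, r). -/
open MeasureTheory Metric

open Set Filter

open scoped ENNReal

/-!
If `Ω ⊆ B(x, 2r)`, the only component is `Ω` itself. Otherwise, since `Ω` is connected, a
component of `Ω ∩ B(x, 2r)` meeting `B(x, r)` cannot stay inside a smaller closed ball, so it
crosses every circle `∂B(x, ρ)` with `r ≤ ρ < 2r`. Going along such a circle from one of these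
components to another, one leaves the first through a point of `∂Ω`; hence `k` components put
`k - 1` points of `∂Ω` on each of these circles. The Eilenberg inequality
`∫ #(∂Ω ∩ ∂B(x, ρ)) dρ ≤ H¹(∂Ω)` for the 1-Lipschitz function `dist · x` then gives
`(k - 1) r ≤ H¹(∂Ω) < ∞`.
-/

theorem IsPreconnected.inter_frontier_nonempty {X : Type*} [TopologicalSpace X] {s t : Set X}
    (hs : IsPreconnected s) (hst : (s ∩ t).Nonempty) (hst' : (s \ t).Nonempty) :
    (s ∩ frontier t).Nonempty := by
  by_contra! h
  have hcover : s ⊆ interior t ∪ (closure t)ᶜ := by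
    intro y hy
    by_cases hyt : y ∈ closure t
    · exact .inl <| by_contra fun hyi => h.subset ⟨hy, hyt, hyi⟩
    · exact .inr hyt
  obtain ⟨y, hys, hyi, hyc⟩ := hs _ _ isOpen_interior isClosed_closure.isOpen_compl hcover
    (hst.mono fun y hy => ⟨hy.1, (hcover hy.1).resolve_right (· (subset_closure hy.2))⟩)
    (hst'.mono fun y hy => ⟨hy.1, (hcover hy.1).resolve_left (hy.2 <| interior_subset ·)⟩)
  exact hyc (interior_subset_closure hyi)

theorem disjoint_frontier_connectedComponentIn {X : Type*} [TopologicalSpace X]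
    [LocallyConnectedSpace X] {V : Set X} (hV : IsOpen V) (z : X) :
    Disjoint (frontier (connectedComponentIn V z)) V := by
  refine Set.disjoint_left.2 fun y hy hyV => ?_
  obtain ⟨w, hwy, hwz⟩ := mem_closure_iff.1 hy.1 _ (hV.connectedComponentIn (x := y))
    (mem_connectedComponentIn hyV)
  have hyz : connectedComponentIn V y = connectedComponentIn V z :=
    (connectedComponentIn_eq hwy).trans (connectedComponentIn_eq hwz).symm
  rw [← hyz, frontier, hV.connectedComponentIn.interior_eq] at hy
  exact hy.2 (mem_connectedComponentIn hyV)

theorem Finset.card_le_encard_add_one_of_forall_exists_mem_Ioo {α : Type*} [LinearOrder α]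
    (T : Finset α) (P : Set α) (h : ∀ a ∈ T, ∀ b ∈ T, a < b → (P ∩ Set.Ioo a b).Nonempty) :
    (T.card : ℕ∞) ≤ P.encard + 1 := by
  induction T using Finset.induction_on_max generalizing P with
  | empty => simp
  | insert a T hlt ih =>
    rcases T.eq_empty_or_nonempty with rfl | hT
    · simp
    obtain ⟨p, hpP, hp⟩ := h _ (mem_insert_of_mem (T.max'_mem hT)) a (mem_insert_self a T)
      (hlt _ (T.max'_mem hT))
    have ih' := ih (P ∩ Set.Iio p) fun b hb b' hb' hbb' => by
      obtain ⟨q, hqP, hq⟩ := h b (mem_insert_of_mem hb) b' (mem_insert_of_mem hb') hbb'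
      exact ⟨q, ⟨hqP, hq.2.trans ((T.le_max' b' hb').trans_lt hp.1)⟩, hq⟩
    have hsub : insert p (P ∩ Set.Iio p) ⊆ P := Set.insert_subset hpP Set.inter_subset_left
    calc ((insert a T).card : ℕ∞) = T.card + 1 := by
          rw [card_insert_of_notMem fun ha => (hlt a ha).false]; push_cast; rfl
      _ ≤ (P ∩ Set.Iio p).encard + 1 + 1 := by gcongr
      _ = (insert p (P ∩ Set.Iio p)).encard + 1 := by
          rw [encard_insert_of_notMem fun hp' => (lt_irrefl p hp'.2)]
      _ ≤ P.encard + 1 := by gcongr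

theorem connectedComponentIn_inter_ball_inter_sphere_nonempty {X : Type*} [PseudoMetricSpace X]
    [LocallyConnectedSpace X] {Ω : Set X} (hΩ : IsOpen Ω) (hΩc : IsPreconnected Ω) {x : X}
    {R ρ : ℝ} (hΩR : ¬ Ω ⊆ ball x R) (hρR : ρ < R) {z : X}
    (hz : (connectedComponentIn (Ω ∩ ball x R) z ∩ ball x ρ).Nonempty) :
    (connectedComponentIn (Ω ∩ ball x R) z ∩ sphere x ρ).Nonempty := by
  set C := connectedComponentIn (Ω ∩ ball x R) z
  obtain ⟨q, hqC, hqρ⟩ := hz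
  have hCsub : C ⊆ Ω ∩ ball x R := connectedComponentIn_subset _ _
  have hfar : ¬ C ⊆ closedBall x ρ := fun hCρ => by
    obtain ⟨y, hyΩ, hyC⟩ := hΩc.inter_frontier_nonempty ⟨q, (hCsub hqC).1, hqC⟩
      (not_subset.1 hΩR |>.imp fun y hy => ⟨hy.1, fun hyC => hy.2 (hCsub hyC).2⟩)
    have hyR : y ∈ ball x R := closedBall_subset_ball hρR <|
      closure_minimal hCρ isClosed_closedBall (frontier_subset_closure hyC)
    exact (disjoint_frontier_connectedComponentIn (hΩ.inter isOpen_ball) z).notMem_of_mem_left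
      hyC ⟨hyΩ, hyR⟩
  obtain ⟨p, hpC, hpρ⟩ := not_subset.1 hfar
  obtain ⟨w, hwC, hw⟩ := (isPreconnected_connectedComponentIn.intermediate_value hqC hpC
    (continuous_id.dist continuous_const).continuousOn) ⟨(mem_ball.1 hqρ).le,
      (not_le.1 (mt mem_closedBall.2 hpρ)).le⟩
  exact ⟨w, hwC, hw⟩

theorem exists_mem_Ioo_mem_frontier_of_mem_connectedComponentIn {X : Type*}
    [TopologicalSpace X] [LocallyConnectedSpace X] {Ω U : Set X} (hΩ : IsOpen Ω) (hU : IsOpen U)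
    {c : ℝ → X} (hc : Continuous c) {a b : ℝ} (hab : a ≤ b) (hcU : MapsTo c (Icc a b) U) {z : X}
    (ha : c a ∈ connectedComponentIn (Ω ∩ U) z) (hb : c b ∈ Ω \ connectedComponentIn (Ω ∩ U) z) :
    ∃ t ∈ Ioo a b, c t ∈ frontier Ω := by
  set C := connectedComponentIn (Ω ∩ U) z
  have hCΩ : C ⊆ Ω := fun y hy => (connectedComponentIn_subset _ _ hy).1
  obtain ⟨_, ⟨t, ht, rfl⟩, hfr⟩ :=
    (isPreconnected_Icc.image _ hc.continuousOn).inter_frontier_nonempty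
      ⟨c a, mem_image_of_mem c (left_mem_Icc.2 hab), ha⟩
      ⟨c b, mem_image_of_mem c (right_mem_Icc.2 hab), hb.2⟩
  have hnotΩ : c t ∉ Ω := fun h =>
    (disjoint_frontier_connectedComponentIn (hΩ.inter hU) z).notMem_of_mem_left hfr ⟨h, hcU ht⟩
  refine ⟨t, ⟨lt_of_le_of_ne ht.1 ?_, lt_of_le_of_ne ht.2 ?_⟩, ?_⟩
  · rintro rfl; exact hnotΩ (hCΩ ha)
  · rintro rfl; exact hnotΩ hb.1
  · rw [hΩ.frontier_eq]
    exact ⟨closure_mono hCΩ hfr.1, hnotΩ⟩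

theorem card_le_encard_frontier_inter_image_add_one {X : Type*} [TopologicalSpace X]
    [LocallyConnectedSpace X] {Ω U : Set X} (hΩ : IsOpen Ω) (hU : IsOpen U)
    {c : ℝ → X} (hc : Continuous c) {I : Set ℝ} (hI : I.OrdConnected) (hcI : InjOn c I)
    (hcU : MapsTo c I U) (𝒞 : Finset (Set X))
    (h𝒞 : ∀ C ∈ 𝒞, (∃ z, C = connectedComponentIn (Ω ∩ U) z) ∧ (C ∩ c '' I).Nonempty) :
    (𝒞.card : ℕ∞) ≤ (frontier Ω ∩ c '' I).encard + 1 := by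
  have hθ : ∀ C ∈ 𝒞, ∃ θ ∈ I, c θ ∈ C := fun C hC => by
    obtain ⟨_, hC', θ, hθI, rfl⟩ := (h𝒞 C hC).2
    exact ⟨θ, hθI, hC'⟩
  choose! θ hθI hθC using hθ
  have heq : ∀ C ∈ 𝒞, ∀ D ∈ 𝒞, c (θ C) ∈ D → C = D := by
    intro C hC D hD hCD
    obtain ⟨⟨z, rfl⟩, -⟩ := h𝒞 C hC
    obtain ⟨⟨w, rfl⟩, -⟩ := h𝒞 D hD
    exact (connectedComponentIn_eq (hθC _ hC)).trans (connectedComponentIn_eq hCD).symm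
  have hcard : (𝒞.image θ).card = 𝒞.card :=
    Finset.card_image_of_injOn fun C hC D hD h => heq C hC D hD (h ▸ hθC D hD)
  set P := I ∩ c ⁻¹' frontier Ω
  have hgap : ∀ a ∈ 𝒞.image θ, ∀ b ∈ 𝒞.image θ, a < b → (P ∩ Ioo a b).Nonempty := by
    simp only [Finset.mem_image]
    rintro _ ⟨C, hC, rfl⟩ _ ⟨D, hD, rfl⟩ hab
    obtain ⟨⟨z, hCz⟩, -⟩ := h𝒞 C hC
    have hDΩ : c (θ D) ∈ Ω := by
      obtain ⟨⟨w, rfl⟩, -⟩ := h𝒞 D hD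
      exact (connectedComponentIn_subset _ _ (hθC _ hD)).1
    have hIcc : Icc (θ C) (θ D) ⊆ I := hI.out (hθI C hC) (hθI D hD)
    obtain ⟨t, ht, hfr⟩ := exists_mem_Ioo_mem_frontier_of_mem_connectedComponentIn hΩ hU hc
      hab.le (hcU.mono_left hIcc) (by rw [← hCz]; exact hθC C hC)
      ⟨hDΩ, by rw [← hCz]; exact fun h => hab.ne (congrArg θ (heq D hD C hC h)).symm⟩
    exact ⟨t, ⟨hIcc (Ioo_subset_Icc_self ht), hfr⟩, ht⟩
  calc (𝒞.card : ℕ∞) ≤ P.encard + 1 :=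
        hcard ▸ (𝒞.image θ).card_le_encard_add_one_of_forall_exists_mem_Ioo P hgap
    _ = (c '' P).encard + 1 := by rw [(hcI.mono inter_subset_left).encard_image]
    _ ≤ (frontier Ω ∩ c '' I).encard + 1 := by
        gcongr
        rintro _ ⟨t, ⟨htI, hfr⟩, rfl⟩
        exact ⟨hfr, mem_image_of_mem c htI⟩

theorem EuclideanSpace.exists_continuous_injOn_image_Ioc_eq_sphere
    (x : EuclideanSpace ℝ (Fin 2)) {ρ : ℝ} (hρ : 0 < ρ) :
    ∃ c : ℝ → EuclideanSpace ℝ (Fin 2), Continuous c ∧ InjOn c (Ioc 0 (2 * Real.pi)) ∧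
      c '' Ioc 0 (2 * Real.pi) = sphere x ρ := by
  let e := Complex.orthonormalBasisOneI.repr.toIsometryEquiv
  refine ⟨e ∘ circleMap (e.symm x) ρ, e.continuous.comp (continuous_circleMap _ _),
    e.injective.comp_injOn ?_, ?_⟩
  · simpa [uIoc_of_le Real.two_pi_pos.le] using
      injOn_circleMap_of_abs_sub_le (c := e.symm x) hρ.ne' (a := 0) (b := 2 * Real.pi)
        (by simp [abs_of_pos Real.two_pi_pos])
  · rw [image_comp, image_circleMap_Ioc, abs_of_pos hρ, e.image_sphere, e.apply_symm_apply]

theorem EuclideanSpace.card_le_encard_frontier_inter_sphere_add_one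
    {Ω : Set (EuclideanSpace ℝ (Fin 2))} (hΩ : IsOpen Ω) {x : EuclideanSpace ℝ (Fin 2)}
    {ρ R : ℝ} (hρ : 0 < ρ) (hρR : ρ < R) (𝒞 : Finset (Set (EuclideanSpace ℝ (Fin 2))))
    (h𝒞 : ∀ C ∈ 𝒞, (∃ z, C = connectedComponentIn (Ω ∩ ball x R) z) ∧
      (C ∩ sphere x ρ).Nonempty) :
    (𝒞.card : ℕ∞) ≤ (frontier Ω ∩ sphere x ρ).encard + 1 := by
  obtain ⟨c, hc, hcI, hcS⟩ := exists_continuous_injOn_image_Ioc_eq_sphere x hρ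
  rw [← hcS] at h𝒞 ⊢
  exact card_le_encard_frontier_inter_image_add_one hΩ isOpen_ball hc ordConnected_Ioc hcI
    (mapsTo_iff_image_subset.2 (hcS ▸ sphere_subset_ball hρR)) 𝒞 h𝒞

theorem exists_cover_ediam_le_tsum_lt_of_hausdorffMeasure_lt {X : Type*} [EMetricSpace X]
    [MeasurableSpace X] [BorelSpace X] {d : ℝ} {E : Set X} {δ c : ℝ≥0∞} (hδ : 0 < δ)
    (hc : μH[d] E < c) :
    ∃ t : ℕ → Set X, E ⊆ ⋃ k, t k ∧ (∀ k, ediam (t k) ≤ δ) ∧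
      ∑' k, ⨆ _ : (t k).Nonempty, ediam (t k) ^ d < c := by
  rw [Measure.hausdorffMeasure_apply] at hc
  simpa only [iInf_lt_iff, exists_prop] using (le_iSup₂_of_le δ hδ le_rfl).trans_lt hc

theorem card_le_tsum_indicator_closure_image {X : Type*} (f : X → ℝ) {F : Finset X}
    {t : ℕ → Set X} {ρ : ℝ} (hF : ∀ y ∈ F, f y = ρ) (hcov : ∀ y ∈ F, ∃ k, y ∈ t k)
    (hsep : ∀ k, ((F : Set X) ∩ t k).Subsingleton) :
    (F.card : ℝ≥0∞) ≤ ∑' k, (closure (f '' t k)).indicator 1 ρ := by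
  choose! κ hκ using hcov
  have hinj : InjOn κ F := fun y hy y' hy' h => hsep (κ y) ⟨hy, hκ y hy⟩ ⟨hy', h ▸ hκ y' hy'⟩
  calc (F.card : ℝ≥0∞) = ∑ y ∈ F, (closure (f '' t (κ y))).indicator 1 ρ := by
        rw [Finset.card_eq_sum_ones, Nat.cast_sum, Nat.cast_one]
        refine Finset.sum_congr rfl fun y hy => ?_
        rw [← hF y hy, indicator_of_mem (subset_closure (mem_image_of_mem f (hκ y hy))),
          Pi.one_apply]
    _ = ∑ k ∈ F.image κ, (closure (f '' t k)).indicator 1 ρ := by rw [Finset.sum_image hinj]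
    _ ≤ ∑' k, (closure (f '' t k)).indicator 1 ρ := ENNReal.sum_le_tsum _

theorem natCast_le_liminf_tsum_indicator_closure_image {X : Type*} [EMetricSpace X]
    {f : X → ℝ} {E : Set X} {t : ℕ → ℕ → Set X} (htE : ∀ n, E ⊆ ⋃ k, t n k)
    (htdiam : ∀ n k, ediam (t n k) ≤ (n : ℝ≥0∞)⁻¹) {ρ : ℝ} {m : ℕ}
    (h : (m : ℕ∞) ≤ (E ∩ f ⁻¹' {ρ}).encard) :
    (m : ℝ≥0∞) ≤ liminf (fun n => ∑' k, (closure (f '' t n k)).indicator 1 ρ) atTop := by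
  obtain ⟨F, hFsub, hFm⟩ := exists_subset_encard_eq h
  have hFfin : F.Finite := finite_of_encard_eq_coe hFm
  have hcard : hFfin.toFinset.card = m := by
    simpa [hFfin.encard_eq_coe_toFinset_card] using hFm
  have hsep : ∀ᶠ n : ℕ in atTop, ∀ y ∈ F, ∀ y' ∈ F, y ≠ y' → (n : ℝ≥0∞)⁻¹ < edist y y' :=
    (eventually_all_finite hFfin).2 fun y _ => (eventually_all_finite hFfin).2 fun y' _ =>
      eventually_imp_distrib_left.2 fun hne =>
        (tendsto_order.1 ENNReal.tendsto_inv_nat_nhds_zero).2 _ (edist_pos.2 hne)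
  refine le_liminf_of_le (by isBoundedDefault) (hsep.mono fun n hn => ?_)
  rw [← hcard]
  refine card_le_tsum_indicator_closure_image f (by simpa using fun y hy => (hFsub hy).2)
    (by simpa using fun y hy => htE n (hFsub hy).1) fun k y hy y' hy' => ?_
  by_contra hne
  exact (hn y (by simpa using hy.1) y' (by simpa using hy'.1) hne).not_ge <|
    (edist_le_ediam_of_mem hy.2 hy'.2).trans (htdiam n k)

theorem LipschitzWith.volume_closure_image_le_ediam {X : Type*} [EMetricSpace X] {f : X → ℝ}
    (hf : LipschitzWith 1 f) (s : Set X) : volume (closure (f '' s)) ≤ ediam s :=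
  calc volume (closure (f '' s)) ≤ ediam (closure (f '' s)) := Real.volume_le_diam _
    _ = ediam (f '' s) := ediam_closure _
    _ ≤ ediam s := by simpa using hf.ediam_image_le s

theorem LipschitzWith.natCast_mul_volume_le_hausdorffMeasure {X : Type*} [EMetricSpace X]
    [MeasurableSpace X] [BorelSpace X] {f : X → ℝ} (hf : LipschitzWith 1 f) {E : Set X}
    {A : Set ℝ} (hA : MeasurableSet A) {m : ℕ}
    (h : ∀ ρ ∈ A, (m : ℕ∞) ≤ (E ∩ f ⁻¹' {ρ}).encard) :
    m * volume A ≤ μH[1] E := by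
  rcases eq_top_or_lt_top (μH[1] E) with hE | hE
  · simp [hE]
  refine ENNReal.le_of_forall_pos_le_add fun ε hε _ => ?_
  have hcov (n : ℕ) := exists_cover_ediam_le_tsum_lt_of_hausdorffMeasure_lt
    (ENNReal.inv_pos.2 (ENNReal.natCast_ne_top n))
    (ENNReal.lt_add_right hE.ne (ENNReal.coe_ne_zero.2 hε.ne'))
  choose t htE htdiam htsum using hcov
  -- Closures make `g n` measurable without increasing the diameters.
  set g : ℕ → ℝ → ℝ≥0∞ := fun n ρ => ∑' k, (closure (f '' t n k)).indicator 1 ρ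
  have hg_meas (n : ℕ) : Measurable (g n) :=
    .tsum fun k => measurable_one.indicator isClosed_closure.measurableSet
  have hg_int (n : ℕ) : ∫⁻ ρ, g n ρ ≤ μH[1] E + ε := by
    rw [lintegral_tsum fun k => (measurable_one.indicator
      isClosed_closure.measurableSet).aemeasurable]
    refine (ENNReal.tsum_le_tsum fun k => ?_).trans (htsum n).le
    rw [lintegral_indicator_one isClosed_closure.measurableSet]
    rcases (t n k).eq_empty_or_nonempty with hk | hk
    · simp [hk]
    · simpa [ciSup_pos hk] using hf.volume_closure_image_le_ediam (t n k)
  have hg_lim (ρ : ℝ) (hρ : ρ ∈ A) : (m : ℝ≥0∞) ≤ liminf (fun n => g n ρ) atTop :=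
    natCast_le_liminf_tsum_indicator_closure_image htE htdiam (h ρ hρ)
  calc (m : ℝ≥0∞) * volume A = ∫⁻ _ in A, (m : ℝ≥0∞) := (setLIntegral_const A _).symm
    _ ≤ ∫⁻ ρ in A, liminf (fun n => g n ρ) atTop := setLIntegral_mono' hA hg_lim
    _ ≤ ∫⁻ ρ, liminf (fun n => g n ρ) atTop := setLIntegral_le_lintegral _ _
    _ ≤ liminf (fun n => ∫⁻ ρ, g n ρ) atTop := lintegral_liminf_le hg_meas
    _ ≤ μH[1] E + ε := liminf_le_of_frequently_le' (.of_forall hg_int)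

theorem finitely_many_components_meeting_ball_general
    (Ω : Set (EuclideanSpace ℝ (Fin 2)))
    (hΩopen : IsOpen Ω) (hΩconn : IsConnected Ω)
    (hfin : μH[1] (frontier Ω) < ⊤)
    (x : EuclideanSpace ℝ (Fin 2))
    (r : ℝ) (hr : 0 < r) :
    {C : Set (EuclideanSpace ℝ (Fin 2)) |
      (∃ z ∈ Ω ∩ ball x (2 * r), C = connectedComponentIn (Ω ∩ ball x (2 * r)) z) ∧
        (C ∩ ball x r).Nonempty}.Finite := by
  by_cases hΩx : Ω ⊆ ball x (2 * r)
  · refine (finite_singleton Ω).subset ?_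
    rintro C ⟨⟨z, hz, rfl⟩, -⟩
    rw [inter_eq_left.2 hΩx] at hz ⊢
    exact hΩconn.isPreconnected.connectedComponentIn hz
  by_contra hinf
  obtain ⟨n, hn⟩ := ENNReal.exists_nat_mul_gt (ENNReal.ofReal_pos.2 hr).ne' hfin.ne
  obtain ⟨𝒞, h𝒞, hcard⟩ := Set.Infinite.exists_subset_card_eq hinf (n + 1)
  have hcount : ∀ ρ ∈ Ioo r (2 * r), (n : ℕ∞) ≤ (frontier Ω ∩ sphere x ρ).encard := by
    intro ρ hρ
    have h := EuclideanSpace.card_le_encard_frontier_inter_sphere_add_one hΩopen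
      (hr.trans hρ.1) hρ.2 𝒞 fun C hC => by
        obtain ⟨⟨z, -, rfl⟩, hmeet⟩ := h𝒞 hC
        exact ⟨⟨z, rfl⟩, connectedComponentIn_inter_ball_inter_sphere_nonempty hΩopen
          hΩconn.isPreconnected hΩx hρ.2 (hmeet.mono (inter_subset_inter_right _
            (ball_subset_ball hρ.1.le)))⟩
    rw [hcard] at h
    simpa using h
  have hlower := (LipschitzWith.dist_left x).natCast_mul_volume_le_hausdorffMeasure
    measurableSet_Ioo hcount
  rw [Real.volume_Ioo, two_mul, add_sub_cancel_right] at hlower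
  exact (hn.trans_le hlower).false

theorem finitely_many_components_meeting_ball
    (Ω : Set (EuclideanSpace ℝ (Fin 2)))
    (hΩopen : IsOpen Ω) (hΩconn : IsConnected Ω)
    (hΩbdd : Bornology.IsBounded Ω)
    (hfin : μH[1] (frontier Ω) < ⊤)
    (x : EuclideanSpace ℝ (Fin 2)) (hx : x ∈ frontier Ω)
    (r : ℝ) (hr : 0 < r) :
    {C : Set (EuclideanSpace ℝ (Fin 2)) |
      (∃ z ∈ Ω ∩ ball x (2 * r), C = connectedComponentIn (Ω ∩ ball x (2 * r)) z) ∧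
        (C ∩ ball x r).Nonempty}.Finite :=
  finitely_many_components_meeting_ball_general Ω hΩopen hΩconn hfin x r hr
end

section
/- Let Ω ⊆ ℝ² be a bounded domain with H^1(∂Ω) < ∞. Then for every x ∈ ∂Ω and ε > 0 there exist r > 0 and a subdomain Ω' ⊆ Ω such that x ∈ ∂Ω', diam(Ω') ≤ ε, H^1(∂Ω') ≤ ε, and ∂Ω' ⊆ ∂Ω ∪ ∂B(x, r). -/
open MeasureTheory Metric

/-!
Choose `R` so small that `∂Ω ∩ B̄(x, R)` has `H¹`-measure less than `ε / 2` and `4πR < ε`.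
By an Eilenberg-type inequality, `M · |{s | #(K ∩ S(x, s)) ≥ M}| ≤ H¹(K)` for every `M`, some
circle `S(x, t)` with `t < R` meets `∂Ω` in finitely many points, so `S(x, t) \ ∂Ω`, the image of
an interval minus finitely many points, has finitely many connected components. A component of
`Ω ∩ B(x, R)` meeting `B(x, t)` must reach `S(x, t)` (otherwise it would be clopen in `Ω`), and
each component of `S(x, t) \ ∂Ω` meeting `Ω` lies in a single component of `Ω ∩ B(x, R)`. Hence
only finitely many components of `Ω ∩ B(x, R)` meet `B(x, t)`, and `x ∈ closure (Ω ∩ B(x, t))`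
lies in the closure of one of them, `Ω'`. Its frontier lies in `(∂Ω ∩ B̄(x, R)) ∪ S(x, R)`, of
measure at most `ε / 2 + 2πR ≤ ε`.
-/

open Set Filter Real
open scoped ENNReal NNReal Topology

theorem Set.Finite.image_of_forall_eq_of_eq {α β γ : Type*} {s : Set α} {φ : α → β} {g : α → γ}
    (hφ : (φ '' s).Finite) (h : ∀ a ∈ s, ∀ b ∈ s, φ a = φ b → g a = g b) : (g '' s).Finite := by
  rcases s.eq_empty_or_nonempty with rfl | ⟨a₀, -⟩
  · simp
  have : Nonempty α := ⟨a₀⟩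
  refine (hφ.image (g ∘ Function.invFunOn φ s)).subset ?_
  rintro _ ⟨a, ha, rfl⟩
  refine ⟨φ a, mem_image_of_mem φ ha, ?_⟩
  have hex : ∃ b ∈ s, φ b = φ a := ⟨a, ha, rfl⟩
  exact h _ (Function.invFunOn_mem hex) a ha (Function.invFunOn_eq hex)

theorem ContinuousOn.finite_connectedComponentIn_image {α β : Type*} [TopologicalSpace α]
    [TopologicalSpace β] {s : Set α} {f : α → β} (hf : ContinuousOn f s)
    (hs : (connectedComponentIn s '' s).Finite) :
    (connectedComponentIn (f '' s) '' (f '' s)).Finite := by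
  rw [image_image]
  exact hs.image_of_forall_eq_of_eq fun a ha b hb hab => connectedComponentIn_eq
    (hf.image_connectedComponentIn_subset ha ⟨b, hab ▸ mem_connectedComponentIn hb, rfl⟩)

theorem Set.OrdConnected.finite_connectedComponentIn_diff {I G : Set ℝ} (hI : I.OrdConnected)
    (hG : G.Finite) : (connectedComponentIn (I \ G) '' (I \ G)).Finite := by
  -- If `a ≤ b` have the same points of `G` above them, no point of `G` lies in `[a, b]`.
  have hcc_eq : ∀ a ∈ I \ G, ∀ b ∈ I \ G, a ≤ b → {c ∈ G | a ≤ c} = {c ∈ G | b ≤ c} →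
      connectedComponentIn (I \ G) a = connectedComponentIn (I \ G) b := by
    intro a ha b hb hab heq
    refine connectedComponentIn_eq (isPreconnected_Icc.subset_connectedComponentIn
      (left_mem_Icc.2 hab) ?_ (right_mem_Icc.2 hab))
    intro c hc
    refine ⟨hI.out ha.1 hb.1 hc, fun hcG => ?_⟩
    have : c ∈ {c ∈ G | b ≤ c} := heq ▸ ⟨hcG, hc.1⟩
    exact hb.2 (le_antisymm hc.2 this.2 ▸ hcG)
  refine (hG.finite_subsets.subset ?_).image_of_forall_eq_of_eq
    (φ := fun a => {c ∈ G | a ≤ c}) fun a ha b hb heq => ?_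
  · rintro _ ⟨a, -, rfl⟩
    exact sep_subset _ _
  · rcases le_total a b with hab | hba
    · exact hcc_eq a ha b hb hab heq
    · exact (hcc_eq b hb a ha hba heq.symm).symm

theorem IsPreconnected.subset_of_disjoint_frontier {X : Type*} [TopologicalSpace X]
    {Q Ω : Set X} (hQ : IsPreconnected Q) (hΩ : IsOpen Ω) (hQΩ : (Q ∩ Ω).Nonempty)
    (hQF : Disjoint Q (frontier Ω)) : Q ⊆ Ω :=
  hQ.subset_of_closure_inter_subset hΩ hQΩ fun _ ⟨hwc, hwQ⟩ => by_contra fun hw =>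
    hQF.notMem_of_mem_left hwQ (hΩ.frontier_eq ▸ ⟨hwc, hw⟩)

section LocallyConnected

variable {X : Type*} [TopologicalSpace X] [LocallyConnectedSpace X] {U : Set X}

theorem IsOpen.closure_connectedComponentIn_inter_subset (hU : IsOpen U) (y : X) :
    closure (connectedComponentIn U y) ∩ U ⊆ connectedComponentIn U y := by
  rintro z ⟨hzc, hzU⟩
  obtain ⟨w, hwz, hwy⟩ := mem_closure_iff.mp hzc _ hU.connectedComponentIn
    (mem_connectedComponentIn hzU)
  rw [connectedComponentIn_eq hwy, ← connectedComponentIn_eq hwz]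
  exact mem_connectedComponentIn hzU

theorem IsOpen.frontier_connectedComponentIn_subset (hU : IsOpen U) (y : X) :
    frontier (connectedComponentIn U y) ⊆ frontier U := by
  rw [hU.connectedComponentIn.frontier_eq, hU.frontier_eq]
  exact fun z ⟨hzc, hzC⟩ => ⟨closure_mono (connectedComponentIn_subset U y) hzc,
    fun hzU => hzC (hU.closure_connectedComponentIn_inter_subset y ⟨hzc, hzU⟩)⟩

end LocallyConnected

theorem frontier_inter_ball_subset {E : Type*} [PseudoMetricSpace E] (Ω : Set E) (x : E)
    (R : ℝ) :
    frontier (Ω ∩ ball x R) ⊆ frontier Ω ∩ closedBall x R ∪ sphere x R :=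
  (frontier_inter_subset _ _).trans <|
    union_subset_union (inter_subset_inter_right _ closure_ball_subset_closedBall)
      (inter_subset_right.trans frontier_ball_subset_sphere)

section MetricSpace

variable {E : Type*} [MetricSpace E] [LocallyConnectedSpace E] {Ω : Set E} {x y₀ : E} {t R : ℝ}

theorem exists_mem_connectedComponentIn_inter_sphere (hΩ : IsOpen Ω) (hΩc : IsPreconnected Ω)
    (htR : t < R) (hy₀ : y₀ ∈ Ω) (hy₀t : t ≤ dist y₀ x) {y : E} (hy : y ∈ Ω ∩ ball x R)
    (hyt : dist y x ≤ t) : ∃ z ∈ connectedComponentIn (Ω ∩ ball x R) y, z ∈ sphere x t := by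
  set C := connectedComponentIn (Ω ∩ ball x R) y
  have hyC : y ∈ C := mem_connectedComponentIn hy
  by_cases hfar : ∃ w ∈ C, t ≤ dist w x
  · obtain ⟨w, hwC, hwt⟩ := hfar
    obtain ⟨z, hzC, hz⟩ := isPreconnected_connectedComponentIn.intermediate_value hyC hwC
      (continuous_id.dist continuous_const).continuousOn ⟨hyt, hwt⟩
    exact ⟨z, hzC, hz⟩
  · push Not at hfar
    have hU : IsOpen (Ω ∩ ball x R) := hΩ.inter isOpen_ball
    have hclosed : closure C ∩ Ω ⊆ C := fun w ⟨hwc, hwΩ⟩ => by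
      refine hU.closure_connectedComponentIn_inter_subset y ⟨hwc, hwΩ, ?_⟩
      have : closure C ⊆ closedBall x t := closure_minimal (fun w hw => (hfar w hw).le)
        isClosed_closedBall
      exact mem_ball.2 ((this hwc).trans_lt htR)
    have hΩC : Ω ⊆ C := hΩc.subset_of_closure_inter_subset hU.connectedComponentIn
      ⟨y, hy.1, hyC⟩ hclosed
    exact absurd hy₀t (hfar y₀ (hΩC hy₀)).not_ge

theorem finite_connectedComponentIn_inter_ball (hΩ : IsOpen Ω) (hΩc : IsPreconnected Ω)
    (htR : t < R) (hy₀ : y₀ ∈ Ω) (hy₀t : t ≤ dist y₀ x)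
    (hfin : (connectedComponentIn (sphere x t \ frontier Ω) '' (sphere x t \ frontier Ω)).Finite) :
    (connectedComponentIn (Ω ∩ ball x R) '' (Ω ∩ ball x t)).Finite := by
  set A := sphere x t \ frontier Ω
  have hball : ball x t ⊆ ball x R := ball_subset_ball htR.le
  choose! z hzC hzS using fun y (hy : y ∈ Ω ∩ ball x t) =>
    exists_mem_connectedComponentIn_inter_sphere hΩ hΩc htR hy₀ hy₀t ⟨hy.1, hball hy.2⟩
      (mem_ball.1 hy.2).le
  have hzΩ : ∀ y ∈ Ω ∩ ball x t, z y ∈ Ω := fun y hy =>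
    (connectedComponentIn_subset _ _ (hzC y hy)).1
  have hzA : ∀ y ∈ Ω ∩ ball x t, z y ∈ A := fun y hy =>
    ⟨hzS y hy, fun h => (hΩ.frontier_eq ▸ h).2 (hzΩ y hy)⟩
  refine (hfin.subset (image_subset_iff.2 fun y hy => ⟨z y, hzA y hy, rfl⟩))
    |>.image_of_forall_eq_of_eq (φ := fun y => connectedComponentIn A (z y))
    fun y hy y' hy' heq => ?_
  have hQ : connectedComponentIn A (z y) ⊆ Ω ∩ ball x R := by
    refine subset_inter (isPreconnected_connectedComponentIn.subset_of_disjoint_frontier hΩ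
      ⟨z y, mem_connectedComponentIn (hzA y hy), hzΩ y hy⟩ ?_) fun w hw => ?_
    · exact disjoint_left.2 fun w hw => ((connectedComponentIn_subset _ _) hw).2
    · exact mem_ball.2 ((mem_sphere.1 ((connectedComponentIn_subset _ _) hw).1).trans_lt htR)
  have hz' : z y' ∈ connectedComponentIn (Ω ∩ ball x R) (z y) :=
    isPreconnected_connectedComponentIn.subset_connectedComponentIn
      (mem_connectedComponentIn (hzA y hy)) hQ (heq ▸ mem_connectedComponentIn (hzA y' hy'))
  rw [connectedComponentIn_eq (hzC y hy), connectedComponentIn_eq (hzC y' hy'),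
    connectedComponentIn_eq hz']

theorem exists_mem_closure_connectedComponentIn_inter_ball (hΩ : IsOpen Ω)
    (hΩc : IsPreconnected Ω) (hx : x ∈ closure Ω) (ht : 0 < t) (htR : t < R) (hy₀ : y₀ ∈ Ω)
    (hy₀t : t ≤ dist y₀ x)
    (hfin : (connectedComponentIn (sphere x t \ frontier Ω) '' (sphere x t \ frontier Ω)).Finite) :
    ∃ y ∈ Ω ∩ ball x R, x ∈ closure (connectedComponentIn (Ω ∩ ball x R) y) := by
  have hsub : Ω ∩ ball x t ⊆ Ω ∩ ball x R := inter_subset_inter_right _ (ball_subset_ball htR.le)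
  have hx' : x ∈ closure (⋃₀ (connectedComponentIn (Ω ∩ ball x R) '' (Ω ∩ ball x t))) := by
    refine closure_mono (fun y hy => mem_sUnion.2
      ⟨_, mem_image_of_mem _ hy, mem_connectedComponentIn (hsub hy)⟩) ?_
    rw [inter_comm]
    exact isOpen_ball.inter_closure ⟨mem_ball_self ht, hx⟩
  rw [(finite_connectedComponentIn_inter_ball hΩ hΩc htR hy₀ hy₀t hfin).closure_sUnion,
    biUnion_image] at hx'
  obtain ⟨y, hy, hxy⟩ := mem_iUnion₂.1 hx'
  exact ⟨y, hsub hy, hxy⟩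

end MetricSpace

theorem exists_mem_Ioo_measure_inter_closedBall_lt {E : Type*} [MetricSpace E]
    [MeasurableSpace E] [OpensMeasurableSpace E] {μ : Measure E} {S : Set E} (hS : μ S ≠ ⊤)
    {x : E} (hx : μ {x} = 0) {η : ℝ≥0∞} (hη : 0 < η) {R₀ : ℝ} (hR₀ : 0 < R₀) :
    ∃ R ∈ Ioo 0 R₀, μ (S ∩ closedBall x R) < η := by
  have hlim : Tendsto (fun r => μ.restrict S (cthickening r {x})) (𝓝 0)
      (𝓝 (μ.restrict S {x})) :=
    tendsto_measure_cthickening_of_isClosed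
      ⟨1, one_pos, ne_top_of_le_ne_top (by simpa using hS) (measure_mono (subset_univ _))⟩
      isClosed_singleton
  have hx' : μ.restrict S {x} < η := (Measure.restrict_apply_le _ _).trans_lt (hx ▸ hη)
  obtain ⟨R, hRη, hR⟩ := (((hlim.eventually (gt_mem_nhds hx')).filter_mono
    nhdsWithin_le_nhds).and (Ioo_mem_nhdsGT hR₀)).exists
  rw [cthickening_singleton _ hR.1.le, Measure.restrict_apply measurableSet_closedBall,
    inter_comm] at hRη
  exact ⟨R, hR, hRη⟩

theorem tsum_indicator_one_eq_encard {ι α : Type*} (I : ι → Set α) (s : α) :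
    ∑' n, (I n).indicator (1 : α → ℝ≥0∞) s = {n | s ∈ I n}.encard := by
  rw [← ENNReal.tsum_set_one]
  refine Eq.trans ?_ (tsum_subtype {n | s ∈ I n} (1 : ι → ℝ≥0∞)).symm
  congr 1

section FiberCount

variable {E : Type*} [EMetricSpace E]

def separatedLevels (f : E → ℝ) (K : Set E) (M : ℕ) (δ : ℝ≥0∞) : Set ℝ :=
  {s | ∃ P ⊆ K ∩ f ⁻¹' {s}, P.encard = M ∧ P.Pairwise (δ < edist · ·)}

theorem separatedLevels_anti (f : E → ℝ) (K : Set E) (M : ℕ) :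
    Antitone (separatedLevels f K M) := fun _ _ hδ _ ⟨P, hPK, hPM, hP⟩ =>
  ⟨P, hPK, hPM, hP.mono' fun _ _ h => hδ.trans_lt h⟩

theorem mul_volume_separatedLevels_le_tsum_ediam {f : E → ℝ} (hf : LipschitzWith 1 f)
    {K : Set E} {δ : ℝ≥0∞} (M : ℕ) {t : ℕ → Set E} (hKt : K ⊆ ⋃ n, t n)
    (ht : ∀ n, ediam (t n) ≤ δ) :
    M * volume (separatedLevels f K M δ) ≤ ∑' n, ediam (t n) := by
  set I : ℕ → Set ℝ := fun n => toMeasurable volume (f '' t n)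
  have hI : ∀ n, MeasurableSet (I n) := fun n => measurableSet_toMeasurable _ _
  set g : ℝ → ℝ≥0∞ := fun s => ∑' n, (I n).indicator 1 s
  have hg : Measurable g := .tsum fun n => measurable_one.indicator (hI n)
  choose! ν hν using fun p (hp : p ∈ K) => mem_iUnion.mp (hKt hp)
  -- Pieces of the cover have diameter `≤ δ`, so the `M` separated points of a fiber lie in `M`
  -- distinct pieces, and the level lies in the image of each of them.
  have hcount : separatedLevels f K M δ ⊆ {s | (M : ℝ≥0∞) ≤ g s} := by
    rintro s ⟨P, hPK, hPM, hPsep⟩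
    have hinj : InjOn ν P := fun p hp q hq hpq => by
      by_contra hne
      have hq' : q ∈ t (ν p) := hpq ▸ hν q (hPK hq).1
      exact (hPsep hp hq hne).not_ge
        ((edist_le_ediam_of_mem (hν p (hPK hp).1) hq').trans (ht _))
    have hsub : ν '' P ⊆ {n | s ∈ I n} := by
      rintro _ ⟨p, hp, rfl⟩
      exact subset_toMeasurable _ _ ⟨p, hν p (hPK hp).1, (hPK hp).2⟩
    calc (M : ℝ≥0∞) = (ν '' P).encard := by rw [hinj.encard_image, hPM]; rfl
      _ ≤ {n | s ∈ I n}.encard := by exact_mod_cast encard_le_encard hsub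
      _ = g s := (tsum_indicator_one_eq_encard I s).symm
  calc _ ≤ M * volume {s | (M : ℝ≥0∞) ≤ g s} := by gcongr
    _ ≤ ∫⁻ s, g s := mul_meas_ge_le_lintegral hg _
    _ = ∑' n, volume (f '' t n) := by
      simp only [g]
      rw [lintegral_tsum fun n => (measurable_one.indicator (hI n)).aemeasurable]
      simp_rw [lintegral_indicator_one (hI _), I, measure_toMeasurable]
    _ ≤ ∑' n, ediam (t n) := ENNReal.tsum_le_tsum fun n =>
      (Real.volume_le_diam _).trans <| by simpa using hf.ediam_image_le (t n)

variable [MeasurableSpace E] [BorelSpace E]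

theorem le_hausdorffMeasure_one_of_forall_cover {s : Set E} {c r : ℝ≥0∞} (hr : 0 < r)
    (h : ∀ t : ℕ → Set E, s ⊆ ⋃ n, t n → (∀ n, ediam (t n) ≤ r) → c ≤ ∑' n, ediam (t n)) :
    c ≤ μH[1] s := by
  rw [Measure.hausdorffMeasure_apply]
  refine le_iSup₂_of_le r hr (le_iInf fun t => le_iInf₂ fun hst ht => (h t hst ht).trans ?_)
  refine ENNReal.tsum_le_tsum fun n => ?_
  rcases (t n).eq_empty_or_nonempty with hn | hn
  · simp [hn]
  · rw [iSup_pos hn, ENNReal.rpow_one]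

theorem mul_volume_setOf_le_encard_le_hausdorffMeasure {f : E → ℝ} (hf : LipschitzWith 1 f)
    (K : Set E) (M : ℕ) :
    M * volume {s | (M : ℕ∞) ≤ (K ∩ f ⁻¹' {s}).encard} ≤ μH[1] K := by
  have hmono : Monotone fun k : ℕ => separatedLevels f K M (k : ℝ≥0∞)⁻¹ := fun k l hkl =>
    separatedLevels_anti f K M (ENNReal.inv_le_inv.2 (by exact_mod_cast hkl))
  have hcover : {s | (M : ℕ∞) ≤ (K ∩ f ⁻¹' {s}).encard} ⊆
      ⋃ k : ℕ, separatedLevels f K M (k : ℝ≥0∞)⁻¹ := by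
    intro s hs
    obtain ⟨P, hPK, hPM⟩ := exists_subset_encard_eq hs
    have : Finite P := (finite_of_encard_eq_coe hPM).to_subtype
    obtain ⟨k, hk⟩ := ENNReal.exists_inv_nat_lt (einfsep_pos_of_finite (s := P)).ne'
    exact mem_iUnion.2 ⟨k, P, hPK, hPM, fun p hp q hq hpq =>
      hk.trans_le (le_edist_of_le_einfsep hp hq hpq le_rfl)⟩
  calc _ ≤ M * volume (⋃ k : ℕ, separatedLevels f K M (k : ℝ≥0∞)⁻¹) := by gcongr
    _ = ⨆ k : ℕ, M * volume (separatedLevels f K M (k : ℝ≥0∞)⁻¹) := by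
      rw [hmono.measure_iUnion, ENNReal.mul_iSup]
    _ ≤ μH[1] K := iSup_le fun k =>
      le_hausdorffMeasure_one_of_forall_cover (ENNReal.inv_pos.2 (ENNReal.natCast_ne_top k))
        fun _ hKt ht => mul_volume_separatedLevels_le_tsum_ediam hf M hKt ht

theorem volume_setOf_infinite_fiber_eq_zero {f : E → ℝ} (hf : LipschitzWith 1 f) {K : Set E}
    (hK : μH[1] K ≠ ⊤) : volume {s | (K ∩ f ⁻¹' {s}).Infinite} = 0 := by
  by_contra h
  obtain ⟨M, hM⟩ := ENNReal.exists_nat_gt (ENNReal.div_lt_top hK h).ne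
  rw [ENNReal.div_lt_iff (Or.inl h) (Or.inr hK)] at hM
  refine hM.not_ge (le_trans ?_ (mul_volume_setOf_le_encard_le_hausdorffMeasure hf K M))
  gcongr with s
  intro hs
  simp [hs.encard_eq]

end FiberCount

theorem exists_mem_Ioo_finite_inter_sphere {E : Type*} [MetricSpace E] [MeasurableSpace E]
    [BorelSpace E] {K : Set E} (hK : μH[1] K ≠ ⊤) (x : E) {a b : ℝ} (hab : a < b) :
    ∃ t ∈ Ioo a b, (K ∩ sphere x t).Finite := by
  have hnull := volume_setOf_infinite_fiber_eq_zero (LipschitzWith.dist_left x) hK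
  obtain ⟨t, ht, hfin⟩ : (Ioo a b \ {s | (K ∩ (dist · x) ⁻¹' {s}).Infinite}).Nonempty := by
    apply nonempty_of_measure_ne_zero
    rw [measure_sdiff_null hnull]
    simp [hab]
  exact ⟨t, ht, not_infinite.1 hfin⟩

noncomputable def planeCircleMap (x : EuclideanSpace ℝ (Fin 2)) (R : ℝ) :
    ℝ → EuclideanSpace ℝ (Fin 2) :=
  Complex.orthonormalBasisOneI.repr ∘ circleMap (Complex.orthonormalBasisOneI.repr.symm x) R

theorem lipschitzWith_planeCircleMap (x : EuclideanSpace ℝ (Fin 2)) (R : ℝ) :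
    LipschitzWith (Real.nnabs R) (planeCircleMap x R) := by
  have h := Complex.orthonormalBasisOneI.repr.lipschitz.comp
    (lipschitzWith_circleMap (Complex.orthonormalBasisOneI.repr.symm x) R)
  rw [one_mul] at h
  exact h

theorem image_planeCircleMap_Ioc (x : EuclideanSpace ℝ (Fin 2)) (R : ℝ) :
    planeCircleMap x R '' Ioc 0 (2 * π) = sphere x |R| := by
  rw [planeCircleMap, image_comp, image_circleMap_Ioc,
    LinearIsometryEquiv.image_sphere, LinearIsometryEquiv.apply_symm_apply]

theorem injOn_planeCircleMap (x : EuclideanSpace ℝ (Fin 2)) {R : ℝ} (hR : R ≠ 0) :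
    InjOn (planeCircleMap x R) (Ioc 0 (2 * π)) := by
  have h := injOn_circleMap_of_abs_sub_le (c := Complex.orthonormalBasisOneI.repr.symm x) hR
    (a := 0) (b := 2 * π) (by rw [abs_of_nonpos (by linarith [pi_pos])]; linarith)
  rw [uIoc_of_le (by positivity)] at h
  exact Complex.orthonormalBasisOneI.repr.injective.comp_injOn h

theorem hausdorffMeasure_sphere_le_two_pi_mul (x : EuclideanSpace ℝ (Fin 2)) {R : ℝ}
    (hR : 0 ≤ R) :
    μH[1] (sphere x R) ≤ ENNReal.ofReal (2 * π * R) := by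
  rw [← abs_of_nonneg hR, ← image_planeCircleMap_Ioc]
  refine ((lipschitzWith_planeCircleMap x R).hausdorffMeasure_image_le zero_le_one _).trans_eq ?_
  rw [hausdorffMeasure_real, Real.volume_Ioc, ENNReal.rpow_one, mul_comm,
    ENNReal.ofReal_mul (by positivity), sub_zero, ← Real.coe_nnabs, ENNReal.ofReal_coe_nnreal]

theorem finite_connectedComponentIn_sphere_diff {x : EuclideanSpace ℝ (Fin 2)} {t : ℝ}
    (ht : 0 < t) {F : Set (EuclideanSpace ℝ (Fin 2))} (hF : (F ∩ sphere x t).Finite) :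
    (connectedComponentIn (sphere x t \ F) '' (sphere x t \ F)).Finite := by
  have hS : sphere x t = planeCircleMap x t '' Ioc 0 (2 * π) := by
    rw [image_planeCircleMap_Ioc, abs_of_pos ht]
  have hG : (Ioc 0 (2 * π) ∩ planeCircleMap x t ⁻¹' F).Finite := by
    refine Finite.of_finite_image (hF.subset ?_)
      ((injOn_planeCircleMap x ht.ne').mono inter_subset_left)
    rintro _ ⟨θ, hθ, rfl⟩
    exact ⟨hθ.2, hS ▸ mem_image_of_mem _ hθ.1⟩
  rw [hS, ← image_sdiff_preimage, ← sdiff_self_inter]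
  exact (lipschitzWith_planeCircleMap x t).continuous.continuousOn
    |>.finite_connectedComponentIn_image (ordConnected_Ioc.finite_connectedComponentIn_diff hG)

theorem exists_subdomain_inter_ball {Ω : Set (EuclideanSpace ℝ (Fin 2))} (hΩ : IsOpen Ω)
    (hΩc : IsConnected Ω) (hfin : μH[1] (frontier Ω) ≠ ⊤) {x : EuclideanSpace ℝ (Fin 2)}
    (hx : x ∈ frontier Ω) {R : ℝ} (hR : 0 < R) (hRΩ : ∃ y₀ ∈ Ω, R ≤ dist y₀ x) :
    ∃ Ω' : Set (EuclideanSpace ℝ (Fin 2)), IsOpen Ω' ∧ IsConnected Ω' ∧ Ω' ⊆ Ω ∩ ball x R ∧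
      x ∈ frontier Ω' ∧ frontier Ω' ⊆ frontier Ω ∩ closedBall x R ∪ sphere x R := by
  obtain ⟨y₀, hy₀, hRy₀⟩ := hRΩ
  obtain ⟨t, ⟨ht, htR⟩, htF⟩ := exists_mem_Ioo_finite_inter_sphere hfin x hR
  obtain ⟨y, hy, hxC⟩ := exists_mem_closure_connectedComponentIn_inter_ball hΩ
    hΩc.isPreconnected (frontier_subset_closure hx) ht htR hy₀ (htR.le.trans hRy₀)
    (finite_connectedComponentIn_sphere_diff ht htF)
  have hU : IsOpen (Ω ∩ ball x R) := hΩ.inter isOpen_ball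
  have hCU : connectedComponentIn (Ω ∩ ball x R) y ⊆ Ω ∩ ball x R :=
    connectedComponentIn_subset _ _
  refine ⟨_, hU.connectedComponentIn, isConnected_connectedComponentIn_iff.2 hy, hCU, ?_,
    (hU.frontier_connectedComponentIn_subset y).trans (frontier_inter_ball_subset Ω x R)⟩
  rw [hU.connectedComponentIn.frontier_eq]
  exact ⟨hxC, fun h => (hΩ.frontier_eq ▸ hx).2 (hCU h).1⟩

theorem exists_small_subdomain_at_boundary_point_general
    (Ω : Set (EuclideanSpace ℝ (Fin 2)))
    (hΩopen : IsOpen Ω) (hΩconn : IsConnected Ω)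
    (hfin : μH[1] (frontier Ω) < ⊤)
    (x : EuclideanSpace ℝ (Fin 2)) (hx : x ∈ frontier Ω)
    (ε : ℝ) (hε : 0 < ε) :
    ∃ r > (0 : ℝ), ∃ Ω' : Set (EuclideanSpace ℝ (Fin 2)),
      IsOpen Ω' ∧ IsConnected Ω' ∧ Ω' ⊆ Ω ∧ x ∈ frontier Ω' ∧
      Metric.diam Ω' ≤ ε ∧ μH[1] (frontier Ω') ≤ ENNReal.ofReal ε ∧
      frontier Ω' ⊆ frontier Ω ∪ sphere x r := by
  obtain ⟨y₀, hy₀⟩ := hΩconn.nonempty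
  have hy₀x : 0 < dist y₀ x := dist_pos.2 (ne_of_mem_of_not_mem hy₀ (hΩopen.frontier_eq ▸ hx).2)
  obtain ⟨R, ⟨hR, hRlt⟩, hRμ⟩ := exists_mem_Ioo_measure_inter_closedBall_lt hfin.ne
    ((Measure.nullSingletonClass_hausdorff _ one_pos).measure_singleton x)
    (ENNReal.ofReal_pos.2 (half_pos hε)) (lt_min (by positivity : 0 < ε / (4 * π)) hy₀x)
  have hRε : 4 * π * R < ε := by
    have := hRlt.trans_le (min_le_left _ _)
    rwa [lt_div_iff₀ (by positivity), mul_comm] at this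
  obtain ⟨Ω', hopen, hconn, hsub, hxΩ', hfr⟩ := exists_subdomain_inter_ball hΩopen hΩconn
    hfin.ne hx hR ⟨y₀, hy₀, hRlt.le.trans (min_le_right _ _)⟩
  refine ⟨R, hR, Ω', hopen, hconn, hsub.trans inter_subset_left, hxΩ', ?_, ?_,
    hfr.trans (union_subset_union_left _ inter_subset_left)⟩
  · refine (diam_mono (hsub.trans inter_subset_right) isBounded_ball).trans ?_
    exact (diam_ball hR.le).trans (by nlinarith [pi_gt_three])
  · calc μH[1] (frontier Ω')
        ≤ μH[1] (frontier Ω ∩ closedBall x R) + μH[1] (sphere x R) :=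
          (measure_mono hfr).trans (measure_union_le _ _)
      _ ≤ ENNReal.ofReal (ε / 2) + ENNReal.ofReal (ε / 2) := by
          gcongr
          exact (hausdorffMeasure_sphere_le_two_pi_mul x hR.le).trans
            (ENNReal.ofReal_le_ofReal (by linarith))
      _ = ENNReal.ofReal ε := by
          rw [← ENNReal.ofReal_add (by positivity) (by positivity), add_halves]

theorem exists_small_subdomain_at_boundary_point
    (Ω : Set (EuclideanSpace ℝ (Fin 2)))
    (hΩopen : IsOpen Ω) (hΩconn : IsConnected Ω)
    (hΩbdd : Bornology.IsBounded Ω)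
    (hfin : μH[1] (frontier Ω) < ⊤)
    (x : EuclideanSpace ℝ (Fin 2)) (hx : x ∈ frontier Ω)
    (ε : ℝ) (hε : 0 < ε) :
    ∃ r > (0 : ℝ), ∃ Ω' : Set (EuclideanSpace ℝ (Fin 2)),
      IsOpen Ω' ∧ IsConnected Ω' ∧ Ω' ⊆ Ω ∧ x ∈ frontier Ω' ∧
      Metric.diam Ω' ≤ ε ∧ μH[1] (frontier Ω') ≤ ENNReal.ofReal ε ∧
      frontier Ω' ⊆ frontier Ω ∪ sphere x r :=
  exists_small_subdomain_at_boundary_point_general Ω hΩopen hΩconn hfin x hx ε hε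
end
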